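/- Let f : G → H be a semi-planar function between finite abelian groups of the same even order k > 2, and suppose the incidence graph of S(G,H;f) is not connected. If a, c ∈ G satisfy P_a^i ∩ P_c^i ≠ ∅ for i = 1 or i = 2, then P_{a−c}^1 = P_{c−a}^1 = P_0^1. -/

import Mathlib

/-- A function `f : G → H` is *semi-planar* if for every nonzero `a : G` and every
`y : H`, the equation `f (x + a) - f x = y` has either 0 or exactly 2 solutions. -/
def IsSemiPlanar {G H : Type*} [AddGroup G] [AddGroup H] (f : G → H) : Prop :=
  ∀ a : G, a ≠ 0 → ∀ y : H,
    Nat.card {x : G // f (x + a) - f x = y} = 0 ∨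
    Nat.card {x : G // f (x + a) - f x = y} = 2

/-- The point `p = (x, y)` is incident with the line `l = L(a, b)` iff `y = f (x - a) + b`. -/
def Incid {G H : Type*} [Sub G] [Add H] (f : G → H) (p l : G × H) : Prop :=
  p.2 = f (p.1 - l.1) + l.2

/-- The adjacency relation of the incidence graph of `S(G,H;f)`: points on the left,
lines on the right, a point adjacent to a line iff incident. -/
def IncAdj {G H : Type*} [Sub G] [Add H] (f : G → H) :
    (G × H) ⊕ (G × H) → (G × H) ⊕ (G × H) → Prop
  | Sum.inl p, Sum.inr l => Incid f p l
  | Sum.inr l, Sum.inl p => Incid f p l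
  | _, _ => False

/-- The incidence graph of `S(G,H;f)`. -/
def incGraph {G H : Type*} [Sub G] [Add H] (f : G → H) :
    SimpleGraph ((G × H) ⊕ (G × H)) where
  Adj := IncAdj f
  symm := by
    constructor
    intro v w h
    cases v <;> cases w <;> exact h
  loopless := by
    constructor
    intro v h
    cases v <;> exact h

/-- The line `L(a,b)` belongs to the substructure `S₁`, i.e. lies in the same
connected component of the incidence graph as the line `L(0,0)`. -/
def InS1 {G H : Type*} [SubtractionMonoid G] [SubNegMonoid H] (f : G → H) (l : G × H) : Prop :=
  (incGraph f).Reachable (Sum.inr l) (Sum.inr ((0 : G), (0 : H)))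

/-! The lines of `S₁` form a subgroup `K` of `G × H` containing `(a, f (x + a) - f x)` for all
`a, x`, so every `P_a^1` is a coset of `N = P_0^1`. For `d ≠ 0` the map `x ↦ f (x + d) - f x`
is at most two-to-one into the coset `P_d^1`, whence `|H| = |G| ≤ 2 |N|`: `N` has index at most
two. Therefore two slices `P_a^1`, `P_c^1` that meet, or whose complements meet, coincide, which
means `(a - c, 0) ∈ K`; translating by `±(a - c, 0)` identifies `P_{a-c}^1` and `P_{c-a}^1`
with `P_0^1`. -/

open Finset

section

variable {G H : Type*} [AddCommGroup G] [AddCommGroup H]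

namespace AddSubgroup

theorem sub_mem_of_index_le_two [Finite H] {N : AddSubgroup H} (hN : N.index ≤ 2)
    {u v : H} (hu : u ∉ N) (hv : v ∉ N) : u - v ∈ N := by
  have h₀ : N.index ≠ 0 := N.index_ne_zero_of_finite
  have h₁ : N.index ≠ 1 := fun h => hu (index_eq_one.mp h ▸ mem_top u)
  rw [sub_eq_add_neg, add_mem_iff_of_index_two (by omega), neg_mem_iff]
  exact iff_of_false hu hv

theorem mk_mem_iff_of_mk_zero_mem {K : AddSubgroup (G × H)} {t : G} (ht : (t, 0) ∈ K) (b : H) :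
    (t, b) ∈ K ↔ (0, b) ∈ K := by
  simpa using add_mem_cancel_right (y := ((0 : G), b)) ht

theorem mk_sub_mem_of_nonempty_inter [Finite H] {K : AddSubgroup (G × H)}
    (hK : (K.comap (AddMonoidHom.inr G H)).index ≤ 2) (hsurj : ∀ a, ∃ b, (a, b) ∈ K) {a c : G}
    (h : ({b | (a, b) ∈ K} ∩ {b | (c, b) ∈ K}).Nonempty ∨
      ({b | (a, b) ∉ K} ∩ {b | (c, b) ∉ K}).Nonempty) :
    (a - c, 0) ∈ K := by
  rcases h with ⟨b, hab, hcb⟩ | ⟨b, hab, hcb⟩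
  · simpa using K.sub_mem hab hcb
  obtain ⟨b₁, hab₁⟩ := hsurj a
  obtain ⟨b₂, hcb₂⟩ := hsurj c
  have h₁ : b - b₁ ∉ K.comap (AddMonoidHom.inr G H) := fun h =>
    hab (by simpa using K.add_mem (mem_comap.mp h) hab₁)
  have h₂ : b - b₂ ∉ K.comap (AddMonoidHom.inr G H) := fun h =>
    hcb (by simpa using K.add_mem (mem_comap.mp h) hcb₂)
  have h₃ := mem_comap.mp (sub_mem_of_index_le_two hK h₁ h₂)
  have : (a - c, (0 : H)) = (a, b₁) - (c, b₂) + AddMonoidHom.inr G H (b - b₁ - (b - b₂)) := by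
    ext <;> simp
  rw [this]
  exact K.add_mem (K.sub_mem hab₁ hcb₂) h₃

end AddSubgroup

theorem incid_add_add_iff (f : G → H) (p l t : G × H) :
    Incid f (p + t) (l + t) ↔ Incid f p l := by
  simp only [Incid, Prod.fst_add, Prod.snd_add, add_sub_add_right_eq_sub, ← add_assoc,
    add_left_inj]

def incGraphTranslate (f : G → H) (t : G × H) : incGraph f →g incGraph f where
  toFun := Sum.map (· + t) (· + t)
  map_rel' {u v} huv := by
    cases u <;> cases v
    all_goals first
      | exact huv.elim
      | exact (incid_add_add_iff f _ _ t).mpr huv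

theorem reachable_inr_add (f : G → H) {l m : G × H} (t : G × H)
    (h : (incGraph f).Reachable (.inr l) (.inr m)) :
    (incGraph f).Reachable (.inr (l + t)) (.inr (m + t)) :=
  h.map (incGraphTranslate f t)

/-- The lines of `S₁`, a subgroup since translations act on the incidence graph. -/
def lineSubgroup (f : G → H) : AddSubgroup (G × H) where
  carrier := {l | InS1 f l}
  zero_mem' := SimpleGraph.Reachable.refl _
  add_mem' {l m} hl hm := by
    have := reachable_inr_add f m hl
    rw [Prod.mk_zero_zero, zero_add] at this
    exact this.trans hm
  neg_mem' {l} hl := by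
    have := reachable_inr_add f (-l) hl
    rw [add_neg_cancel, Prod.mk_zero_zero, zero_add] at this
    exact this.symm

theorem mk_sub_mem_lineSubgroup (f : G → H) (a x : G) :
    (a, f (x + a) - f x) ∈ lineSubgroup f := by
  have h₁ : (incGraph f).Adj (.inr (a, f (x + a) - f x)) (.inl (x + a, f (x + a))) := by
    change Incid f _ _
    simp [Incid]
  have h₂ : (incGraph f).Adj (.inl (x + a, f (x + a))) (.inr (0, 0)) := by
    change Incid f _ _
    simp [Incid]
  exact h₁.reachable.trans h₂.reachable

theorem IsSemiPlanar.card_filter_le_two [Fintype G] [DecidableEq H] {f : G → H}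
    (hf : IsSemiPlanar f) {a : G} (ha : a ≠ 0) (y : H) : #{x | f (x + a) - f x = y} ≤ 2 := by
  rw [← Fintype.card_subtype, ← Nat.card_eq_fintype_card]
  rcases hf a ha y with h | h <;> omega

theorem card_le_two_mul_card_comap_inr [Fintype G] [Finite H] [Nontrivial G] {f : G → H}
    (hf : IsSemiPlanar f) :
    Nat.card G ≤ 2 * Nat.card ((lineSubgroup f).comap (AddMonoidHom.inr G H)) := by
  classical
  have := Fintype.ofFinite H
  obtain ⟨d, hd⟩ := exists_ne (0 : G)
  set N := (lineSubgroup f).comap (AddMonoidHom.inr G H)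
  set y₀ := f (0 + d) - f 0
  have maps : ∀ x ∈ (univ : Finset G), f (x + d) - f x - y₀ ∈ (N : Set H).toFinset := by
    intro x _
    have := sub_mem (mk_sub_mem_lineSubgroup f d x) (mk_sub_mem_lineSubgroup f d 0)
    rw [Prod.mk_sub_mk, sub_self] at this
    rwa [Set.mem_toFinset, SetLike.mem_coe, AddSubgroup.mem_comap, AddMonoidHom.inr_apply]
  have fibers : ∀ y ∈ (N : Set H).toFinset, #{x | f (x + d) - f x - y₀ = y} ≤ 2 := by
    intro y _
    simp only [sub_eq_iff_eq_add (b := y₀)]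
    exact hf.card_filter_le_two hd _
  calc Nat.card G = #(univ : Finset G) := by rw [Nat.card_eq_fintype_card, card_univ]
    _ ≤ 2 * #(N : Set H).toFinset := card_le_mul_card_image_of_maps_to maps 2 fibers
    _ = 2 * Nat.card N := by rw [← Nat.card_eq_card_toFinset]; rfl

theorem index_comap_inr_lineSubgroup_le_two [Fintype G] [Finite H] [Nontrivial G] {f : G → H}
    (hf : IsSemiPlanar f) (hcard : Nat.card G = Nat.card H) :
    ((lineSubgroup f).comap (AddMonoidHom.inr G H)).index ≤ 2 := by
  set N := (lineSubgroup f).comap (AddMonoidHom.inr G H)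
  refine Nat.le_of_mul_le_mul_right ?_ (Nat.card_pos : 0 < Nat.card N)
  rw [N.index_mul_card, ← hcard]
  exact card_le_two_mul_card_comap_inr hf

end

theorem Pac_eq_P0_general {G H : Type*} [AddCommGroup G] [AddCommGroup H]
    [Fintype G] [Fintype H]
    (hcard : Fintype.card G = Fintype.card H)
    (f : G → H) (hf : IsSemiPlanar f)
    (hk : 2 < Fintype.card G) (a c : G)
    (hint : ({b : H | InS1 f (a, b)} ∩ {b : H | InS1 f (c, b)}).Nonempty ∨
            ({b : H | ¬ InS1 f (a, b)} ∩ {b : H | ¬ InS1 f (c, b)}).Nonempty) :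
    {b : H | InS1 f (a - c, b)} = {b : H | InS1 f ((0 : G), b)} ∧
    {b : H | InS1 f (c - a, b)} = {b : H | InS1 f ((0 : G), b)} := by
  have : Nontrivial G := Fintype.one_lt_card_iff_nontrivial.mp (by omega)
  have hindex := index_comap_inr_lineSubgroup_le_two hf
    (by simpa only [Nat.card_eq_fintype_card] using hcard)
  have hac : (a - c, (0 : H)) ∈ lineSubgroup f :=
    AddSubgroup.mk_sub_mem_of_nonempty_inter hindex
      (fun a => ⟨_, mk_sub_mem_lineSubgroup f a 0⟩) hint
  have hca : (c - a, (0 : H)) ∈ lineSubgroup f := by simpa using neg_mem hac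
  exact ⟨Set.ext (AddSubgroup.mk_mem_iff_of_mk_zero_mem hac),
    Set.ext (AddSubgroup.mk_mem_iff_of_mk_zero_mem hca)⟩

/-- If `k > 2`, the incidence graph of `S(G,H;f)` is not connected, and
`P_a^i ∩ P_c^i ≠ ∅` for `i = 1` or `i = 2`, then `P_{a-c}^1 = P_{c-a}^1 = P_0^1`. -/
theorem Pac_eq_P0 {G H : Type*} [AddCommGroup G] [AddCommGroup H]
    [Fintype G] [Fintype H]
    (hcard : Fintype.card G = Fintype.card H) (heven : Even (Fintype.card G))
    (f : G → H) (hf : IsSemiPlanar f)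
    (hk : 2 < Fintype.card G) (hnc : ¬ (incGraph f).Connected) (a c : G)
    (hint : ({b : H | InS1 f (a, b)} ∩ {b : H | InS1 f (c, b)}).Nonempty ∨
            ({b : H | ¬ InS1 f (a, b)} ∩ {b : H | ¬ InS1 f (c, b)}).Nonempty) :
    {b : H | InS1 f (a - c, b)} = {b : H | InS1 f ((0 : G), b)} ∧
    {b : H | InS1 f (c - a, b)} = {b : H | InS1 f ((0 : G), b)} :=
  Pac_eq_P0_general hcard f hf hk a c hint
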